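/- For every natural number n, the standard n-dimensional simplex Δⁿ = { p : Fin (n+1) → ℝ | p i ≥ 0 for all i and Σᵢ p i = 1 }, equipped with the pointwise midpoint operation (p ⊕ q)(i) = (p i + q i)/2, is the midpoint-convex body freely generated by the (n+1)-element set: for every cancellative iterative midpoint set (A, m) and every function f : Fin (n+1) → A there is a unique midpoint homomorphism h : Δⁿ → A sending, for each i, the i-th vertex (the indicator function δᵢ) to f i. -/

import Mathlib

/-- A midpoint operation: idempotent, commutative, satisfying transposition. -/
def IsMidpoint {A : Type} (m : A → A → A) : Prop :=
  (∀ x, m x x = x) ∧ (∀ x y, m x y = m y x) ∧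
    (∀ x y z w, m (m x y) (m z w) = m (m x z) (m y w))

/-- Cancellation: `m x y = m x z` implies `y = z`. -/
def Cancellative {A : Type} (m : A → A → A) : Prop :=
  ∀ x y z, m x y = m x z → y = z

/-- Iterativity in the category of sets. -/
def Iterative {A : Type} (m : A → A → A) : Prop :=
  ∀ (X : Type) (c : X → A × X), ∃! u : X → A, ∀ x, u x = m (c x).1 (u (c x).2)

/-- The pointwise midpoint operation on the standard `n`-simplex. -/
noncomputable def simplexMid {n : ℕ} (p q : stdSimplex ℝ (Fin (n + 1))) :
    stdSimplex ℝ (Fin (n + 1)) :=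
  ⟨fun i => (p.1 i + q.1 i) / 2, by
    constructor
    · intro i
      have h1 := p.2.1 i; have h2 := q.2.1 i
      linarith
    · have h1 := p.2.2; have h2 := q.2.2
      rw [← Finset.sum_div, Finset.sum_add_distrib, h1, h2]
      norm_num⟩

/-- The `i`-th vertex of the standard `n`-simplex, i.e. the indicator `δᵢ`. -/
noncomputable def simplexVertex {n : ℕ} (i : Fin (n + 1)) : stdSimplex ℝ (Fin (n + 1)) :=
  ⟨fun j => if j = i then 1 else 0, by
    constructor
    · intro j
      by_cases h : j = i <;> simp [h]
    · simp⟩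

/-!
A multiset `s` of `2 ^ L` vertices names the dyadic point with weights `count i s / 2 ^ L`; in
any midpoint set it can be evaluated as a balanced tree of midpoints, and the medial law makes
the value independent of how `s` is split into halves.

Every point `p` of the simplex is the midpoint of a dyadic point `d p` of level `n` (chosen
below `2 p`) and of the remainder `r p = 2 p - d p`, so `p = ∑ k, d (r^[k] p) / 2 ^ (k + 1)`.
Iterativity of the target turns this expansion into the value of the extension, and its
uniqueness clause gives uniqueness of the homomorphism. That the extension preserves midpoints
and vertices amounts to comparing two digit expansions of one point: the carry between them
stays a difference of two dyadic points of the simplex, so the differences telescope, and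
cancellation carries the telescoping over to the target.
-/

namespace IsMidpoint

variable {A : Type} {m : A → A → A}

theorem mid_self (hm : IsMidpoint m) (x : A) : m x x = x := hm.1 x

theorem comm (hm : IsMidpoint m) (x y : A) : m x y = m y x := hm.2.1 x y

theorem medial (hm : IsMidpoint m) (x y z w : A) : m (m x y) (m z w) = m (m x z) (m y w) :=
  hm.2.2 x y z w

theorem mid_mid_swap (hm : IsMidpoint m) (x y z w : A) :
    m (m x y) (m z w) = m (m x w) (m z y) := by
  rw [hm.medial, hm.comm y w, ← hm.medial]

end IsMidpoint

namespace Multiset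

variable {α : Type*}

theorem exists_le_card_eq {s : Multiset α} {k : ℕ} (hk : k ≤ card s) :
    ∃ t ≤ s, card t = k := by
  obtain ⟨t, ht⟩ := card_pos_iff_exists_mem.1 <| by
    rw [card_powersetCard]; exact Nat.choose_pos hk
  exact ⟨t, mem_powersetCard.1 ht⟩

theorem coe_take_add_coe_drop_toList (s : Multiset α) (k : ℕ) :
    (s.toList.take k : Multiset α) + s.toList.drop k = s := by
  rw [coe_add, List.take_append_drop, coe_toList]

theorem card_toList_take_drop {s : Multiset α} {N : ℕ} (hs : card s = N + N) :
    card (s.toList.take N : Multiset α) = N ∧ card (s.toList.drop N : Multiset α) = N := by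
  simp only [coe_card, List.length_take, List.length_drop, length_toList, hs]
  omega

variable [DecidableEq α]

theorem card_le_card_inter_add_card_inter {a c d : Multiset α} (h : a ≤ c + d) :
    card a ≤ card (a ∩ c) + card (a ∩ d) := by
  rw [← card_add]
  refine card_le_card (le_iff_count.2 fun x => ?_)
  have := le_iff_count.1 h x
  simp only [count_add, count_inter] at this ⊢
  omega

theorem inter_add_eq_inter_add_of_add_eq_add {a b c d : Multiset α} (h : a + b = c + d) :
    b ∩ d + a = a ∩ c + d := by
  ext x
  have := congrArg (count x) h
  simp only [count_add, count_inter] at this ⊢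
  omega

theorem card_sub_eq_card_sub {s t : Multiset α} (h : card s = card t) :
    card (s - t) = card (t - s) := by
  have hs := congrArg card (sub_add_inter s t)
  have ht := congrArg card (sub_add_inter t s)
  rw [card_add] at hs ht
  rw [inter_comm] at ht
  omega

end Multiset

open Multiset

section DyadicEval

variable {α A : Type} [Inhabited α] (m : A → A → A) (f : α → A)

/-- The value at the dyadic point with weights `count i s / 2 ^ L`, as a balanced tree of
midpoints over the `2 ^ L` generators listed in `s` (meaningful only when `card s = 2 ^ L`). -/
noncomputable def dyadicEval : ℕ → Multiset α → A
  | 0, s => f s.toList.headI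
  | L + 1, s => m (dyadicEval L (s.toList.take (2 ^ L))) (dyadicEval L (s.toList.drop (2 ^ L)))

theorem dyadicEval_zero_singleton (i : α) : dyadicEval m f 0 {i} = f i := by
  simp [dyadicEval]

variable {m}

theorem dyadicEval_succ_add_of_mid_congr {L : ℕ}
    (hL : ∀ a b c d : Multiset α, card a = 2 ^ L → card b = 2 ^ L → card c = 2 ^ L →
      card d = 2 ^ L → a + b = c + d →
      m (dyadicEval m f L a) (dyadicEval m f L b) = m (dyadicEval m f L c) (dyadicEval m f L d))
    {a b : Multiset α} (ha : card a = 2 ^ L) (hb : card b = 2 ^ L) :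
    dyadicEval m f (L + 1) (a + b) = m (dyadicEval m f L a) (dyadicEval m f L b) := by
  obtain ⟨hl, hr⟩ := card_toList_take_drop (by rw [card_add, ha, hb] : card (a + b) = _)
  exact hL _ _ _ _ hl hr ha hb (coe_take_add_coe_drop_toList _ _)

/-- Split off a common half `x` of `a` and `c` and a common half `w` of `b` and `d`; the medial
law reduces the claim to the rests. -/
theorem dyadicEval_mid_congr_succ [DecidableEq α] (hm : IsMidpoint m) {L : ℕ}
    (hL : ∀ a b c d : Multiset α, card a = 2 ^ L → card b = 2 ^ L → card c = 2 ^ L →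
      card d = 2 ^ L → a + b = c + d →
      m (dyadicEval m f L a) (dyadicEval m f L b) = m (dyadicEval m f L c) (dyadicEval m f L d))
    {a b c d : Multiset α} (ha : card a = 2 ^ (L + 1)) (hb : card b = 2 ^ (L + 1))
    (hc : card c = 2 ^ (L + 1)) (hd : card d = 2 ^ (L + 1)) (h : a + b = c + d)
    (hac : 2 ^ L ≤ card (a ∩ c)) :
    m (dyadicEval m f (L + 1) a) (dyadicEval m f (L + 1) b) =
      m (dyadicEval m f (L + 1) c) (dyadicEval m f (L + 1) d) := by
  have hbd : card (a ∩ c) = card (b ∩ d) := by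
    have := congrArg card (inter_add_eq_inter_add_of_add_eq_add h)
    rw [card_add, card_add] at this
    omega
  obtain ⟨x, hxac, hx⟩ := exists_le_card_eq hac
  obtain ⟨w, hwbd, hw⟩ := exists_le_card_eq (hbd ▸ hac)
  obtain ⟨a', rfl⟩ := Multiset.le_iff_exists_add.1 (le_inter_iff.1 hxac).1
  obtain ⟨c', rfl⟩ := Multiset.le_iff_exists_add.1 (le_inter_iff.1 hxac).2
  obtain ⟨b', rfl⟩ := Multiset.le_iff_exists_add.1 (le_inter_iff.1 hwbd).1
  obtain ⟨d', rfl⟩ := Multiset.le_iff_exists_add.1 (le_inter_iff.1 hwbd).2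
  simp only [card_add, pow_succ] at ha hb hc hd
  have h' : a' + b' = c' + d' := by
    rw [add_add_add_comm x a', add_add_add_comm x c'] at h
    exact add_left_cancel h
  have split := fun {s t : Multiset α} => dyadicEval_succ_add_of_mid_congr f hL (a := s) (b := t)
  rw [split hx (by omega), split hw (by omega), split hx (by omega), split hw (by omega),
    hm.medial _ (dyadicEval m f L a'), hm.medial _ (dyadicEval m f L c'),
    hL a' b' c' d' (by omega) (by omega) (by omega) (by omega) h']

theorem dyadicEval_mid_congr (hm : IsMidpoint m) (L : ℕ) (a b c d : Multiset α)
    (ha : card a = 2 ^ L) (hb : card b = 2 ^ L) (hc : card c = 2 ^ L) (hd : card d = 2 ^ L)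
    (h : a + b = c + d) :
    m (dyadicEval m f L a) (dyadicEval m f L b) = m (dyadicEval m f L c) (dyadicEval m f L d) := by
  classical
  induction L generalizing a b c d with
  | zero =>
    obtain ⟨x, rfl⟩ := card_eq_one.1 ha
    obtain ⟨y, rfl⟩ := card_eq_one.1 hb
    obtain ⟨z, rfl⟩ := card_eq_one.1 hc
    obtain ⟨w, rfl⟩ := card_eq_one.1 hd
    have hx : x ∈ ({z} : Multiset α) + {w} := h ▸ mem_add.2 (Or.inl (mem_singleton_self x))
    rcases mem_add.1 hx with hxz | hxw
    · rw [mem_singleton.1 hxz] at h ⊢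
      rw [singleton_inj.1 (add_left_cancel h)]
    · rw [mem_singleton.1 hxw, add_comm] at h
      rw [mem_singleton.1 hxw, singleton_inj.1 (add_right_cancel h), hm.comm]
  | succ L ih =>
    have hcover := card_le_card_inter_add_card_inter (h ▸ le_add_right a b : a ≤ c + d)
    rw [ha, pow_succ] at hcover
    by_cases hac : 2 ^ L ≤ card (a ∩ c)
    · exact dyadicEval_mid_congr_succ f hm ih ha hb hc hd h hac
    · rw [hm.comm (dyadicEval m f (L + 1) c)]
      exact dyadicEval_mid_congr_succ f hm ih ha hb hd hc (h.trans (add_comm c d)) (by omega)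

theorem dyadicEval_succ_add (hm : IsMidpoint m) {L : ℕ} {a b : Multiset α}
    (ha : card a = 2 ^ L) (hb : card b = 2 ^ L) :
    dyadicEval m f (L + 1) (a + b) = m (dyadicEval m f L a) (dyadicEval m f L b) :=
  dyadicEval_succ_add_of_mid_congr f (dyadicEval_mid_congr f hm L) ha hb

theorem dyadicEval_succ_add_self (hm : IsMidpoint m) {L : ℕ} {a : Multiset α}
    (ha : card a = 2 ^ L) : dyadicEval m f (L + 1) (a + a) = dyadicEval m f L a := by
  rw [dyadicEval_succ_add f hm ha ha, hm.mid_self]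

theorem mid_mid_dyadicEval (hm : IsMidpoint m) {L : ℕ} {x y z : Multiset α}
    (hx : card x = 2 ^ L) (hy : card y = 2 ^ L) (hz : card z = 2 ^ L) :
    m (m (dyadicEval m f L x) (dyadicEval m f L y)) (dyadicEval m f L z) =
      dyadicEval m f (L + 2) (x + y + (z + z)) := by
  rw [← hm.mid_self (dyadicEval m f L z), ← dyadicEval_succ_add f hm hx hy,
    ← dyadicEval_succ_add f hm hz hz, ← dyadicEval_succ_add f hm] <;>
  simp only [card_add, hx, hy, hz, pow_succ] <;> ring

theorem dyadicEval_replicate (hm : IsMidpoint m) (L : ℕ) (i : α) :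
    dyadicEval m f L (replicate (2 ^ L) i) = f i := by
  induction L with
  | zero => exact dyadicEval_zero_singleton m f i
  | succ L ih =>
    rw [pow_succ, mul_two, replicate_add, dyadicEval_succ_add_self f hm (card_replicate _ _), ih]

end DyadicEval

section MidSeries

variable {A : Type} {m : A → A → A}

theorem Iterative.eq_of_rec (hit : Iterative m) {X : Type} (c : X → A × X) {u v : X → A}
    (hu : ∀ x, u x = m (c x).1 (u (c x).2)) (hv : ∀ x, v x = m (c x).1 (v (c x).2)) : u = v :=
  (hit X c).unique hu hv

/-- The infinite midpoint combination `∑ k, x k / 2 ^ (k + 1)`, given by iterativity. -/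
noncomputable def midSeries (hit : Iterative m) : (ℕ → A) → A :=
  (hit (ℕ → A) fun x => (x 0, fun k => x (k + 1))).exists.choose

theorem midSeries_eq (hit : Iterative m) (x : ℕ → A) :
    midSeries hit x = m (x 0) (midSeries hit fun k => x (k + 1)) :=
  (hit (ℕ → A) fun x => (x 0, fun k => x (k + 1))).exists.choose_spec x

theorem midSeries_const (hm : IsMidpoint m) (hit : Iterative m) (a : A) :
    midSeries hit (fun _ => a) = a :=
  congrFun (hit.eq_of_rec (X := Unit) (fun _ => (a, ())) (u := fun _ => midSeries hit fun _ => a)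
    (fun _ => midSeries_eq hit _)
    (fun _ => (hm.mid_self a).symm)) ()

theorem midSeries_mid (hm : IsMidpoint m) (hit : Iterative m) (x y : ℕ → A) :
    midSeries hit (fun k => m (x k) (y k)) = m (midSeries hit x) (midSeries hit y) :=
  congrFun (hit.eq_of_rec (X := (ℕ → A) × (ℕ → A))
    (fun z => (m (z.1 0) (z.2 0), (fun k => z.1 (k + 1), fun k => z.2 (k + 1))))
    (u := fun z => midSeries hit fun k => m (z.1 k) (z.2 k))
    (v := fun z => m (midSeries hit z.1) (midSeries hit z.2))
    (fun _ => midSeries_eq hit _)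
    (fun z => by dsimp only; rw [midSeries_eq hit z.1, midSeries_eq hit z.2, hm.medial]))
    (x, y)

/-- In real terms `hstep` says `x k - y k = 2 (p k - q k) - (p (k + 1) - q (k + 1))`, so that
`∑ k, (x k - y k) / 2 ^ (k + 1)` telescopes to `p 0 - q 0 = 0`; in `A` the telescoping is
done by cancellation. -/
theorem midSeries_eq_of_telescoping (hm : IsMidpoint m) (hc : Cancellative m)
    (hit : Iterative m) {x y p q : ℕ → A} (h0 : p 0 = q 0)
    (hstep : ∀ k, m (m (p (k + 1)) (x k)) (q k) = m (m (q (k + 1)) (y k)) (p k)) :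
    midSeries hit x = midSeries hit y := by
  have hsum := congrArg (midSeries hit) (funext hstep)
  simp only [midSeries_mid hm hit] at hsum
  rw [midSeries_eq hit p, midSeries_eq hit q, ← h0,
    hm.mid_mid_swap (midSeries hit fun k => p (k + 1)),
    hm.mid_mid_swap (midSeries hit fun k => q (k + 1)),
    hm.comm (midSeries hit fun k => q (k + 1))] at hsum
  exact hc _ _ _ (hc _ _ _ hsum)

end MidSeries

section Carry

variable {α : Type}

/-- `carry b k = ∑ j < k, 2 ^ (k - 1 - j) • b j`. -/
def carry (b : ℕ → Multiset α) : ℕ → Multiset α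
  | 0 => 0
  | k + 1 => 2 • carry b k + b k

theorem card_carry_eq_card_carry {a b : ℕ → Multiset α} (h : ∀ k, card (a k) = card (b k))
    (k : ℕ) : card (carry a k) = card (carry b k) := by
  induction k with
  | zero => rfl
  | succ k ih => simp only [carry, card_add, card_nsmul, ih, h k]

variable [DecidableEq α] [Inhabited α] {A : Type} {m : A → A → A} (f : α → A)

theorem midSeries_dyadicEval_eq_of_card_carry (hm : IsMidpoint m) (hc : Cancellative m)
    (hit : Iterative m) {L : ℕ} {a b : ℕ → Multiset α} (ha : ∀ k, card (a k) = 2 ^ L)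
    (hb : ∀ k, card (b k) = 2 ^ L) (hcarry : ∀ k, card (carry b k - carry a k) ≤ 2 ^ L) :
    midSeries hit (fun k => dyadicEval m f L (a k)) =
      midSeries hit (fun k => dyadicEval m f L (b k)) := by
  -- `p k` and `q k` are the positive and negative parts of the carry, padded to `2 ^ L` points
  let pad k := replicate (2 ^ L - card (carry b k - carry a k)) (default : α)
  let p k := carry b k - carry a k + pad k
  let q k := carry a k - carry b k + pad k
  have hp k : card (p k) = 2 ^ L := by
    simp only [p, pad, card_add, card_replicate]
    have := hcarry k
    omega
  have hq k : card (q k) = 2 ^ L := by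
    rw [← hp k]
    simp only [p, q, card_add,
      card_sub_eq_card_sub (card_carry_eq_card_carry (fun k => (ha k).trans (hb k).symm) k)]
  refine midSeries_eq_of_telescoping hm hc hit (p := fun k => dyadicEval m f L (p k))
    (q := fun k => dyadicEval m f L (q k)) (by simp [p, q, carry]) fun k => ?_
  rw [mid_mid_dyadicEval f hm (hp _) (ha k) (hq k), mid_mid_dyadicEval f hm (hq _) (hb k) (hp k)]
  congr 1
  ext i
  simp only [p, q, pad, carry, count_add, count_sub, count_nsmul]
  omega

end Carry

section DyadicPoint

variable {ι : Type} [DecidableEq ι]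

noncomputable def dyadicPoint (L : ℕ) (s : Multiset ι) (i : ι) : ℝ := s.count i / 2 ^ L

theorem dyadicPoint_mem [Fintype ι] {L : ℕ} {s : Multiset ι} (hs : card s = 2 ^ L) :
    dyadicPoint L s ∈ stdSimplex ℝ ι := by
  refine ⟨fun i => by unfold dyadicPoint; positivity, ?_⟩
  simp only [dyadicPoint, ← Finset.sum_div]
  rw [← Nat.cast_sum, sum_count_eq_card fun a _ => Finset.mem_univ a, hs]
  simp

theorem dyadicPoint_succ_add (L : ℕ) (s t : Multiset ι) (i : ι) :
    dyadicPoint (L + 1) (s + t) i = (dyadicPoint L s i + dyadicPoint L t i) / 2 := by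
  simp only [dyadicPoint, count_add, Nat.cast_add, pow_succ]
  ring

theorem dyadicPoint_two_nsmul_add (L : ℕ) (s t : Multiset ι) (i : ι) :
    dyadicPoint L (2 • s + t) i = 2 * dyadicPoint L s i + dyadicPoint L t i := by
  simp only [dyadicPoint, count_add, count_nsmul, Nat.cast_add, Nat.cast_mul]
  ring

theorem dyadicPoint_replicate (L : ℕ) (i j : ι) :
    dyadicPoint L (replicate (2 ^ L) i) j = if j = i then 1 else 0 := by
  by_cases h : j = i
  · simp [dyadicPoint, h]
  · simp [dyadicPoint, count_replicate, h, Ne.symm h]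

theorem dyadicPoint_carry_sub {L : ℕ} {a b : ℕ → Multiset ι} {x y : ℕ → ι → ℝ} (h0 : x 0 = y 0)
    (hx : ∀ k i, x (k + 1) i = 2 * x k i - dyadicPoint L (a k) i)
    (hy : ∀ k i, y (k + 1) i = 2 * y k i - dyadicPoint L (b k) i) (k : ℕ) (i : ι) :
    dyadicPoint L (carry b k) i - dyadicPoint L (carry a k) i = x k i - y k i := by
  induction k with
  | zero => simp [carry, dyadicPoint, h0]
  | succ k ih =>
    rw [carry, carry, dyadicPoint_two_nsmul_add, dyadicPoint_two_nsmul_add, hx, hy]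
    linarith

theorem card_sub_le_of_dyadicPoint_sub [Fintype ι] {L : ℕ} {s t : Multiset ι} {c d : ι → ℝ}
    (hc : c ∈ stdSimplex ℝ ι) (hd : d ∈ stdSimplex ℝ ι)
    (h : ∀ i, dyadicPoint L s i - dyadicPoint L t i = c i - d i) : card (s - t) ≤ 2 ^ L := by
  have hcount i : (count i (s - t) : ℝ) ≤ 2 ^ L * c i := by
    rw [count_sub]
    rcases le_total (count i s) (count i t) with hle | hle
    · rw [Nat.sub_eq_zero_of_le hle, Nat.cast_zero]
      exact mul_nonneg (by positivity) (hc.1 i)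
    · have hi : (count i s : ℝ) - count i t = 2 ^ L * (c i - d i) := by
        rw [← h i, dyadicPoint, dyadicPoint]
        field_simp
      rw [Nat.cast_sub hle, hi]
      nlinarith [hd.1 i, pow_pos (two_pos : (0 : ℝ) < 2) L]
  have : (card (s - t) : ℝ) ≤ 2 ^ L := by
    rw [← sum_count_eq_card (s := Finset.univ) fun a _ => Finset.mem_univ a, Nat.cast_sum]
    calc _ ≤ ∑ i, 2 ^ L * c i := Finset.sum_le_sum fun i _ => hcount i
      _ = 2 ^ L := by rw [← Finset.mul_sum, hc.2, mul_one]
  exact_mod_cast this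

variable [Fintype ι] [Inhabited ι] {A : Type} {m : A → A → A} (f : ι → A)

/-- The carry `x k - y k` is a difference of two points of the simplex, which bounds the size
of `carry b k - carry a k`. -/
theorem midSeries_dyadicEval_eq_of_orbits (hm : IsMidpoint m) (hc : Cancellative m)
    (hit : Iterative m) {L : ℕ} {a b : ℕ → Multiset ι} (ha : ∀ k, card (a k) = 2 ^ L)
    (hb : ∀ k, card (b k) = 2 ^ L) {x y : ℕ → stdSimplex ℝ ι} (h0 : x 0 = y 0)
    (hx : ∀ k i, x (k + 1) i = 2 * x k i - dyadicPoint L (a k) i)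
    (hy : ∀ k i, y (k + 1) i = 2 * y k i - dyadicPoint L (b k) i) :
    midSeries hit (fun k => dyadicEval m f L (a k)) =
      midSeries hit (fun k => dyadicEval m f L (b k)) :=
  midSeries_dyadicEval_eq_of_card_carry f hm hc hit ha hb fun k =>
    card_sub_le_of_dyadicPoint_sub (x k).2 (y k).2
      (dyadicPoint_carry_sub (x := fun k => x k) (y := fun k => y k) (congrArg _ h0) hx hy k)

end DyadicPoint

section Simplex

variable {n : ℕ}

@[simp]
theorem simplexMid_apply (p q : stdSimplex ℝ (Fin (n + 1))) (i : Fin (n + 1)) :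
    simplexMid p q i = (p i + q i) / 2 := rfl

theorem simplexMid_isMidpoint : IsMidpoint (simplexMid (n := n)) := by
  refine ⟨fun p => ?_, fun p q => ?_, fun p q r s => ?_⟩ <;> ext i <;>
    simp only [simplexMid_apply] <;> ring

theorem simplexMid_cancellative : Cancellative (simplexMid (n := n)) := by
  intro p q r h
  ext i
  have := congrArg (· i) h
  simp only [simplexMid_apply] at this
  linarith

theorem summable_div_two_pow_succ {a : ℕ → ℝ} (h0 : ∀ k, 0 ≤ a k) (h1 : ∀ k, a k ≤ 1) :
    Summable fun k => a k / 2 ^ (k + 1) := by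
  refine summable_geometric_two.of_nonneg_of_le (fun k => div_nonneg (h0 k) (by positivity))
    fun k => ?_
  calc a k / 2 ^ (k + 1) ≤ 1 / 2 ^ (k + 1) := by gcongr; exact h1 k
    _ ≤ (1 / 2) ^ k := by rw [one_div_pow]; gcongr <;> norm_num

theorem summable_simplex_div_two_pow_succ (a : ℕ → stdSimplex ℝ (Fin (n + 1)))
    (i : Fin (n + 1)) : Summable fun k => a k i / 2 ^ (k + 1) :=
  summable_div_two_pow_succ (fun k => stdSimplex.zero_le (a k) i) fun k => stdSimplex.le_one (a k) i

noncomputable def simplexSeries (a : ℕ → stdSimplex ℝ (Fin (n + 1))) :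
    stdSimplex ℝ (Fin (n + 1)) :=
  ⟨fun i => ∑' k, a k i / 2 ^ (k + 1),
    fun i => tsum_nonneg fun k => div_nonneg (stdSimplex.zero_le (a k) i) (by positivity), by
    rw [← Summable.tsum_finsetSum fun i _ => summable_simplex_div_two_pow_succ a i]
    simp_rw [← Finset.sum_div, stdSimplex.sum_eq_one, pow_succ', ← div_div]
    exact tsum_geometric_two' 1⟩

theorem simplexSeries_eq (a : ℕ → stdSimplex ℝ (Fin (n + 1))) :
    simplexSeries a = simplexMid (a 0) (simplexSeries fun k => a (k + 1)) := by
  ext i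
  change ∑' k, a k i / 2 ^ (k + 1) = (a 0 i + ∑' k, a (k + 1) i / 2 ^ (k + 1)) / 2
  rw [(summable_simplex_div_two_pow_succ a i).tsum_eq_zero_add, add_div, ← tsum_div_const]
  simp only [pow_succ, zero_add, pow_zero, one_mul, div_div]

theorem eq_zero_of_eq_half {X : Type} (g : X → X) {w : X → ℝ} (hb : ∀ x, |w x| ≤ 1)
    (hw : ∀ x, w x = w (g x) / 2) : w = 0 := by
  have hK : ∀ K x, |w x| ≤ (1 / 2) ^ K := by
    intro K
    induction K with
    | zero => simpa using hb
    | succ K ih => intro x; rw [hw, abs_div, abs_two, pow_succ]; linarith [ih (g x)]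
  funext x
  by_contra hx
  obtain ⟨K, hK'⟩ := exists_pow_lt_of_lt_one (abs_pos.2 hx) (by norm_num : (1 / 2 : ℝ) < 1)
  exact (hK K x).not_gt hK'

theorem simplexMid_iterative : Iterative (simplexMid (n := n)) := by
  intro X c
  let u x := simplexSeries fun k => (c ((fun y => (c y).2)^[k] x)).1
  have hu x : u x = simplexMid (c x).1 (u (c x).2) := by
    dsimp only [u]
    rw [simplexSeries_eq]
    simp only [Function.iterate_succ_apply, Function.iterate_zero_apply]
  refine ⟨u, hu, fun v hv => funext fun x => ?_⟩
  ext i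
  have := eq_zero_of_eq_half (fun y => (c y).2) (w := fun x => v x i - u x i)
    (fun x => abs_sub_le_iff.2
      ⟨by linarith [stdSimplex.le_one (v x) i, stdSimplex.zero_le (u x) i],
        by linarith [stdSimplex.le_one (u x) i, stdSimplex.zero_le (v x) i]⟩)
    (fun x => by simp only [hv x, hu x, simplexMid_apply]; ring)
  exact sub_eq_zero.1 (congrFun this x)

end Simplex

section FreeExtension

variable {n : ℕ}

theorem two_pow_le_card_floor (p : stdSimplex ℝ (Fin (n + 1))) :
    2 ^ n ≤ card (∑ i, replicate ⌊2 ^ (n + 1) * p i⌋₊ i) := by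
  rw [card_sum]
  simp only [card_replicate]
  have hfloor : (2 : ℝ) ^ (n + 1) - (n + 1) < ∑ i, (⌊2 ^ (n + 1) * p i⌋₊ : ℝ) :=
    calc (2 : ℝ) ^ (n + 1) - (n + 1) = ∑ i, ((2 : ℝ) ^ (n + 1) * p i - 1) := by
          rw [Finset.sum_sub_distrib, ← Finset.mul_sum, stdSimplex.sum_eq_one]; simp
      _ < _ := Finset.sum_lt_sum_of_nonempty Finset.univ_nonempty fun i _ => by
          linarith [Nat.lt_floor_add_one ((2 : ℝ) ^ (n + 1) * p i)]
  have hn : (n : ℝ) < 2 ^ n := by exact_mod_cast Nat.lt_two_pow_self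
  have : (2 : ℝ) ^ n < ((∑ i, ⌊2 ^ (n + 1) * p i⌋₊ : ℕ) : ℝ) + 1 := by
    push_cast
    linarith [pow_succ (2 : ℝ) n]
  exact Nat.lt_succ_iff.1 (by exact_mod_cast this)

/-- `2 ^ n` generators whose dyadic point lies below `2 p`, taken from the coordinatewise floors
of `2 ^ (n + 1) p`; these lose at most `n + 1 ≤ 2 ^ n` of the `2 ^ (n + 1)` units. -/
noncomputable def dyadicPart (p : stdSimplex ℝ (Fin (n + 1))) : Multiset (Fin (n + 1)) :=
  (exists_le_card_eq (two_pow_le_card_floor p)).choose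

theorem card_dyadicPart (p : stdSimplex ℝ (Fin (n + 1))) : card (dyadicPart p) = 2 ^ n :=
  (exists_le_card_eq (two_pow_le_card_floor p)).choose_spec.2

theorem dyadicPart_le (p : stdSimplex ℝ (Fin (n + 1))) :
    dyadicPart p ≤ ∑ i, replicate ⌊2 ^ (n + 1) * p i⌋₊ i :=
  (exists_le_card_eq (two_pow_le_card_floor p)).choose_spec.1

theorem dyadicPoint_dyadicPart_le (p : stdSimplex ℝ (Fin (n + 1))) (i : Fin (n + 1)) :
    dyadicPoint n (dyadicPart p) i ≤ 2 * p i := by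
  have hle := count_le_of_le i (dyadicPart_le p)
  rw [count_sum', Finset.sum_eq_single i (fun j _ hj => by simp [count_replicate, hj])
    (by simp), count_replicate_self] at hle
  rw [dyadicPoint, div_le_iff₀ (by positivity)]
  calc (count i (dyadicPart p) : ℝ) ≤ ⌊2 ^ (n + 1) * p i⌋₊ := by exact_mod_cast hle
    _ ≤ 2 ^ (n + 1) * p i := Nat.floor_le (by have := stdSimplex.zero_le p i; positivity)
    _ = 2 * p i * 2 ^ n := by ring

noncomputable def remainder (p : stdSimplex ℝ (Fin (n + 1))) : stdSimplex ℝ (Fin (n + 1)) :=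
  ⟨fun i => 2 * p i - dyadicPoint n (dyadicPart p) i,
    fun i => sub_nonneg.2 (dyadicPoint_dyadicPart_le p i), by
      rw [Finset.sum_sub_distrib, ← Finset.mul_sum, stdSimplex.sum_eq_one,
        (dyadicPoint_mem (card_dyadicPart p)).2]
      norm_num⟩

theorem card_dyadicPart_add (p q : stdSimplex ℝ (Fin (n + 1))) :
    card (dyadicPart p + dyadicPart q) = 2 ^ (n + 1) := by
  rw [card_add, card_dyadicPart, card_dyadicPart, pow_succ, mul_two]

theorem remainder_apply (p : stdSimplex ℝ (Fin (n + 1))) (i : Fin (n + 1)) :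
    remainder p i = 2 * p i - dyadicPoint n (dyadicPart p) i := rfl

theorem simplexMid_dyadicPart_remainder (p : stdSimplex ℝ (Fin (n + 1))) :
    simplexMid ⟨_, dyadicPoint_mem (card_dyadicPart p)⟩ (remainder p) = p := by
  ext i
  rw [simplexMid_apply, remainder_apply]
  change (dyadicPoint n (dyadicPart p) i + _) / 2 = _
  ring

variable {A : Type} {m : A → A → A}

noncomputable def freeExt (hit : Iterative m) (f : Fin (n + 1) → A)
    (p : stdSimplex ℝ (Fin (n + 1))) : A :=
  midSeries hit fun k => dyadicEval m f n (dyadicPart (remainder^[k] p))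

theorem freeExt_eq (hit : Iterative m) (f : Fin (n + 1) → A) (p : stdSimplex ℝ (Fin (n + 1))) :
    freeExt hit f p = m (dyadicEval m f n (dyadicPart p)) (freeExt hit f (remainder p)) := by
  rw [freeExt, midSeries_eq]
  simp only [Function.iterate_succ_apply, Function.iterate_zero_apply]
  rfl

theorem apply_dyadicPoint_eq_dyadicEval {f : Fin (n + 1) → A}
    {g : stdSimplex ℝ (Fin (n + 1)) → A} (hg : ∀ p q, g (simplexMid p q) = m (g p) (g q))
    (hgv : ∀ i, g (simplexVertex i) = f i) {L : ℕ} {s : Multiset (Fin (n + 1))}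
    (hs : card s = 2 ^ L) : g ⟨dyadicPoint L s, dyadicPoint_mem hs⟩ = dyadicEval m f L s := by
  induction L generalizing s with
  | zero =>
    obtain ⟨i, rfl⟩ := card_eq_one.1 hs
    rw [dyadicEval_zero_singleton, ← hgv]
    congr
    funext j
    simpa [replicate_one] using dyadicPoint_replicate 0 i j
  | succ L ih =>
    obtain ⟨hl, hr⟩ := card_toList_take_drop (hs.trans (pow_succ' 2 L ▸ two_mul _))
    have hsplit : (⟨dyadicPoint (L + 1) s, dyadicPoint_mem hs⟩ : stdSimplex ℝ (Fin (n + 1))) =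
        simplexMid ⟨_, dyadicPoint_mem hl⟩ ⟨_, dyadicPoint_mem hr⟩ := by
      ext i
      rw [simplexMid_apply]
      change dyadicPoint (L + 1) s i = (dyadicPoint L _ i + dyadicPoint L _ i) / 2
      rw [← dyadicPoint_succ_add, coe_take_add_coe_drop_toList]
    rw [hsplit, hg, ih hl, ih hr]
    rfl

theorem eq_freeExt (hit : Iterative m) {f : Fin (n + 1) → A} {g : stdSimplex ℝ (Fin (n + 1)) → A}
    (hg : ∀ p q, g (simplexMid p q) = m (g p) (g q)) (hgv : ∀ i, g (simplexVertex i) = f i) :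
    g = freeExt hit f :=
  hit.eq_of_rec (fun p => (dyadicEval m f n (dyadicPart p), remainder p))
    (fun p => by
      conv_lhs => rw [← simplexMid_dyadicPart_remainder p]
      rw [hg, apply_dyadicPoint_eq_dyadicEval hg hgv (card_dyadicPart p)])
    (freeExt_eq hit f)

theorem freeExt_vertex (hm : IsMidpoint m) (hc : Cancellative m) (hit : Iterative m)
    (f : Fin (n + 1) → A) (i : Fin (n + 1)) : freeExt hit f (simplexVertex i) = f i :=
  calc freeExt hit f (simplexVertex i)
      = midSeries hit fun _ => dyadicEval m f n (replicate (2 ^ n) i) :=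
        midSeries_dyadicEval_eq_of_orbits f hm hc hit (fun _ => card_dyadicPart _)
          (fun _ => card_replicate _ _) (x := fun k => remainder^[k] (simplexVertex i))
          (y := fun _ => simplexVertex i) rfl
          (fun k j => by rw [Function.iterate_succ_apply', remainder_apply])
          (fun k j => by
            rw [dyadicPoint_replicate]
            change (if j = i then (1 : ℝ) else 0) = 2 * (if j = i then 1 else 0) - _
            split_ifs <;> norm_num)
    _ = f i := by rw [dyadicEval_replicate f hm, midSeries_const hm hit]

theorem freeExt_mid (hm : IsMidpoint m) (hc : Cancellative m) (hit : Iterative m)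
    (f : Fin (n + 1) → A) (p q : stdSimplex ℝ (Fin (n + 1))) :
    freeExt hit f (simplexMid p q) = m (freeExt hit f p) (freeExt hit f q) := by
  let x k := remainder^[k] (simplexMid p q)
  let y k := simplexMid (remainder^[k] p) (remainder^[k] q)
  calc freeExt hit f (simplexMid p q)
      = midSeries hit fun k =>
          dyadicEval m f (n + 1) (dyadicPart (x k) + dyadicPart (x k)) := by
        simp only [dyadicEval_succ_add_self f hm (card_dyadicPart _)]
        rfl
    _ = midSeries hit fun k => dyadicEval m f (n + 1)
          (dyadicPart (remainder^[k] p) + dyadicPart (remainder^[k] q)) :=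
        midSeries_dyadicEval_eq_of_orbits f hm hc hit
          (fun _ => card_dyadicPart_add _ _) (fun _ => card_dyadicPart_add _ _)
          (x := x) (y := y) rfl
          (fun k j => by
            simp only [x, Function.iterate_succ_apply', remainder_apply, dyadicPoint_succ_add]
            ring)
          (fun k j => by
            simp only [y, Function.iterate_succ_apply', simplexMid_apply, remainder_apply,
              dyadicPoint_succ_add]
            ring)
    _ = m (freeExt hit f p) (freeExt hit f q) := by
        simp only [dyadicEval_succ_add f hm (card_dyadicPart _) (card_dyadicPart _)]
        exact midSeries_mid hm hit _ _

end FreeExtension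

/-- The standard `n`-simplex with the pointwise midpoint operation is the
midpoint-convex body freely generated by the `(n+1)`-element set. -/
theorem simplex_free_mconvex_body (n : ℕ) :
    IsMidpoint (simplexMid (n := n)) ∧ Cancellative (simplexMid (n := n)) ∧
    Iterative (simplexMid (n := n)) ∧
    ∀ (A : Type) (m : A → A → A), IsMidpoint m → Cancellative m → Iterative m →
      ∀ f : Fin (n + 1) → A, ∃! h : stdSimplex ℝ (Fin (n + 1)) → A,
        (∀ p q, h (simplexMid p q) = m (h p) (h q)) ∧
        ∀ i, h (simplexVertex i) = f i := by
  refine ⟨simplexMid_isMidpoint, simplexMid_cancellative, simplexMid_iterative, ?_⟩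
  intro A m hm hc hit f
  exact ⟨freeExt hit f, ⟨freeExt_mid hm hc hit f, freeExt_vertex hm hc hit f⟩,
    fun g hg => eq_freeExt hit hg.1 hg.2⟩
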